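/- arXiv:1210.4991 — 2 statements merged into one kernel-verified Lean document; each statement's English description precedes it below -/
import Mathlib

section
/- For the quintic x⁵ + 25x⁴ − x − 1, the degree-4 invariant A of the associated binary quintic vanishes. -/
/- Cayley Ω-process, transvectants, and the invariants of the binary quintic,
over a field K. Variables in `Fin 10`: 0..5 are the coefficients a₀,…,a₅;
6 = x (and x₁), 7 = y (and y₁); 8 = x₂; 9 = y₂. -/

open MvPolynomial

variable {K : Type*} [Field K]

/-- The Cayley operator Ω = ∂²/∂x₁∂y₂ − ∂²/∂x₂∂y₁. -/
noncomputable def Omega (w : MvPolynomial (Fin 10) K) : MvPolynomial (Fin 10) K :=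
  pderiv 6 (pderiv 9 w) - pderiv 8 (pderiv 7 w)

/-- Rename the variables x,y (6,7) of a form to x₂,y₂ (8,9). -/
noncomputable def toSecond (g : MvPolynomial (Fin 10) K) : MvPolynomial (Fin 10) K :=
  bind₁ (fun i => if i = 6 then X 8 else if i = 7 then X 9 else X i) g

/-- Substitute x₁ = x₂ = x, y₁ = y₂ = y at the end of the Ω-process. -/
noncomputable def collapse (w : MvPolynomial (Fin 10) K) : MvPolynomial (Fin 10) K :=
  bind₁ (fun i => if i = 8 then X 6 else if i = 9 then X 7 else X i) w

/-- The m-th transvectant (f,g)^m via Cayley's Ω-process. -/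
noncomputable def transvectant (m : ℕ) (f g : MvPolynomial (Fin 10) K) :
    MvPolynomial (Fin 10) K :=
  collapse (Omega^[m] (f * toSecond g))

/-- The generic binary quintic f = a₀x⁵ + a₁x⁴y + a₂x³y² + a₃x²y³ + a₄xy⁴ + a₅y⁵. -/
noncomputable def genQuintic : MvPolynomial (Fin 10) K :=
  X 0 * X 6 ^ 5 + X 1 * X 6 ^ 4 * X 7 + X 2 * X 6 ^ 3 * X 7 ^ 2 +
    X 3 * X 6 ^ 2 * X 7 ^ 3 + X 4 * X 6 * X 7 ^ 4 + X 5 * X 7 ^ 5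

/-- The covariant i = (f,f)⁴/288, of order 2 and degree 2. -/
noncomputable def covI : MvPolynomial (Fin 10) K :=
  C (288 : K)⁻¹ * transvectant 4 genQuintic genQuintic

/-- The covariant H = (f,f)²/16, of order 6 and degree 2. -/
noncomputable def covH : MvPolynomial (Fin 10) K :=
  C (16 : K)⁻¹ * transvectant 2 genQuintic genQuintic

/-- The covariant j = −(f,i)²/12, of order 3 and degree 3. -/
noncomputable def covJ : MvPolynomial (Fin 10) K :=
  -(C (12 : K)⁻¹ * transvectant 2 genQuintic covI)

/-- The invariant A = (i,i)²/32, of degree 4. -/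
noncomputable def invA : MvPolynomial (Fin 10) K :=
  C (32 : K)⁻¹ * transvectant 2 covI covI

/-- The covariant τ = (j,j)²/16, of order 2 and degree 6. -/
noncomputable def covTau : MvPolynomial (Fin 10) K :=
  C (16 : K)⁻¹ * transvectant 2 covJ covJ

/-- The invariant B = (τ,i)²/8, of degree 8. -/
noncomputable def invB : MvPolynomial (Fin 10) K :=
  C (8 : K)⁻¹ * transvectant 2 covTau covI

/-- The invariant Δ = (A²−4B)/125, of degree 8 (the discriminant). -/
noncomputable def invDelta : MvPolynomial (Fin 10) K :=
  C (125 : K)⁻¹ * (invA ^ 2 - 4 * invB)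

/-- The invariant C = (τ,τ)²/6, of degree 12. -/
noncomputable def invC : MvPolynomial (Fin 10) K :=
  C (6 : K)⁻¹ * transvectant 2 covTau covTau

/-- The invariant M = (−9C + 2000AΔ + 1008A³)/25, of degree 12. -/
noncomputable def invM : MvPolynomial (Fin 10) K :=
  C (25 : K)⁻¹ * (-9 * invC + 2000 * invA * invDelta + 1008 * invA ^ 3)

/-!
Substituting numbers for the coefficient variables a₀, …, a₅ commutes with the Ω-process,
since Ω only differentiates in x₁, y₁, x₂, y₂. So A can be computed from the specialised
quintic f = x⁵ + 25x⁴y − xy⁴ − y⁵, whose covariant i = (f,f)⁴/288 is −20(x − 5y)².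
For a binary quadratic px² + qxy + ry² the transvectant (i,i)² is 2(4pr − q²), minus twice
its discriminant, and a perfect square has discriminant zero.
-/

@[simp]
lemma pderiv_ofNat {σ R : Type*} [CommSemiring R] (i : σ) (n : ℕ) [n.AtLeastTwo] :
    pderiv i (ofNat(n) : MvPolynomial σ R) = 0 :=
  (pderiv i).map_natCast n

noncomputable def specializeCoeffs (v : Fin 10 → K) :
    MvPolynomial (Fin 10) K →ₐ[K] MvPolynomial (Fin 10) K :=
  aeval fun i => if (i : ℕ) < 6 then C (v i) else X i

section Specialization

variable (v : Fin 10 → K)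

lemma specializeCoeffs_C (c : K) : specializeCoeffs v (C c) = C c := by
  simp [specializeCoeffs]

lemma specializeCoeffs_X_of_le {i : Fin 10} (hi : 6 ≤ (i : ℕ)) :
    specializeCoeffs v (X i) = X i := by
  simp [specializeCoeffs, Nat.not_lt.mpr hi]

lemma pderiv_specializeCoeffs {j : Fin 10} (hj : 6 ≤ (j : ℕ)) (p : MvPolynomial (Fin 10) K) :
    pderiv j (specializeCoeffs v p) = specializeCoeffs v (pderiv j p) := by
  induction p using MvPolynomial.induction_on with
  | C a => simp
  | add p q hp hq => simp [hp, hq]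
  | mul_X p i hp =>
    simp only [map_mul, pderiv_mul, hp, map_add]
    congr 1
    by_cases hi : (i : ℕ) < 6
    · have hij : i ≠ j := fun h => by omega
      simp [specializeCoeffs, hi, pderiv_X_of_ne hij]
    · classical
      rw [specializeCoeffs_X_of_le v (Nat.not_lt.mp hi), pderiv_X]
      rcases eq_or_ne j i with rfl | hij <;> simp [*]

lemma Omega_specializeCoeffs (p : MvPolynomial (Fin 10) K) :
    Omega (specializeCoeffs v p) = specializeCoeffs v (Omega p) := by
  simp only [Omega, pderiv_specializeCoeffs v (j := 6) (by decide),
    pderiv_specializeCoeffs v (j := 7) (by decide), pderiv_specializeCoeffs v (j := 8) (by decide),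
    pderiv_specializeCoeffs v (j := 9) (by decide), map_sub]

lemma toSecond_specializeCoeffs (p : MvPolynomial (Fin 10) K) :
    toSecond (specializeCoeffs v p) = specializeCoeffs v (toSecond p) := by
  suffices h : (bind₁ fun i : Fin 10 => if i = 6 then X 8 else if i = 7 then X 9 else X i).comp
      (specializeCoeffs v) = (specializeCoeffs v).comp (bind₁ fun i : Fin 10 =>
        if i = 6 then X 8 else if i = 7 then X 9 else X i) from DFunLike.congr_fun h p
  ext i
  fin_cases i <;> simp [specializeCoeffs]

lemma collapse_specializeCoeffs (p : MvPolynomial (Fin 10) K) :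
    collapse (specializeCoeffs v p) = specializeCoeffs v (collapse p) := by
  suffices h : (bind₁ fun i : Fin 10 => if i = 8 then X 6 else if i = 9 then X 7 else X i).comp
      (specializeCoeffs v) = (specializeCoeffs v).comp (bind₁ fun i : Fin 10 =>
        if i = 8 then X 6 else if i = 9 then X 7 else X i) from DFunLike.congr_fun h p
  ext i
  fin_cases i <;> simp [specializeCoeffs]

lemma transvectant_specializeCoeffs (m : ℕ) (f g : MvPolynomial (Fin 10) K) :
    transvectant m (specializeCoeffs v f) (specializeCoeffs v g) =
      specializeCoeffs v (transvectant m f g) := by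
  rw [transvectant, toSecond_specializeCoeffs, ← map_mul,
    (Function.Commute.iterate_left (Omega_specializeCoeffs v) m) _, collapse_specializeCoeffs,
    transvectant]

lemma eval_specializeCoeffs (p : MvPolynomial (Fin 10) K) :
    eval v (specializeCoeffs v p) = eval v p := by
  induction p using MvPolynomial.induction_on with
  | C a => simp
  | add p q hp hq => simp [hp, hq]
  | mul_X p i hp =>
    rw [map_mul, map_mul, hp, map_mul]
    congr 1
    by_cases hi : (i : ℕ) < 6 <;> simp [specializeCoeffs, hi]

lemma specializeCoeffs_genQuintic :
    specializeCoeffs v genQuintic =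
      C (v 0) * X 6 ^ 5 + C (v 1) * X 6 ^ 4 * X 7 + C (v 2) * X 6 ^ 3 * X 7 ^ 2 +
        C (v 3) * X 6 ^ 2 * X 7 ^ 3 + C (v 4) * X 6 * X 7 ^ 4 + C (v 5) * X 7 ^ 5 := by
  simp [genQuintic, specializeCoeffs]

end Specialization

noncomputable def binaryQuadratic (p q r : K) : MvPolynomial (Fin 10) K :=
  C p * X 6 ^ 2 + C q * X 6 * X 7 + C r * X 7 ^ 2

lemma C_mul_binaryQuadratic (c p q r : K) :
    C c * binaryQuadratic p q r = binaryQuadratic (c * p) (c * q) (c * r) := by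
  simp only [binaryQuadratic, C_mul]
  ring

lemma transvectant_two_binaryQuadratic_self (p q r : K) :
    transvectant 2 (binaryQuadratic p q r) (binaryQuadratic p q r) =
      C (2 * (4 * p * r - q ^ 2)) := by
  simp [transvectant, toSecond, collapse, Omega, pderiv_X, binaryQuadratic, map_ofNat]
  ring

noncomputable def exampleQuintic : MvPolynomial (Fin 10) K :=
  X 6 ^ 5 + 25 * X 6 ^ 4 * X 7 - X 6 * X 7 ^ 4 - X 7 ^ 5

lemma transvectant_four_exampleQuintic_self :
    transvectant 4 (exampleQuintic : MvPolynomial (Fin 10) K) exampleQuintic =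
      binaryQuadratic (-5760) 57600 (-144000) := by
  simp [transvectant, toSecond, exampleQuintic, map_ofNat]
  -- expanding f(x₁, y₁) f(x₂, y₂) into monomials first keeps the four rounds of Leibniz rule small
  ring_nf
  simp [Omega, pderiv_X, collapse, binaryQuadratic, map_ofNat]
  ring

/-- for the quintic x⁵ + 25x⁴ − x − 1, the degree-4 invariant A of
the associated binary quintic vanishes. -/
theorem invariant_A_vanishes_example :
    ∀ v : Fin 10 → ℚ, v 0 = 1 → v 1 = 25 → v 2 = 0 → v 3 = 0 → v 4 = -1 → v 5 = -1 →
      eval v (invA (K := ℚ)) = 0 := by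
  intro v h0 h1 h2 h3 h4 h5
  have hf : specializeCoeffs v genQuintic = exampleQuintic := by
    rw [specializeCoeffs_genQuintic, exampleQuintic]
    simp [h0, h1, h2, h3, h4, h5, map_ofNat]
    ring
  have hi : specializeCoeffs v covI = binaryQuadratic (-20) 200 (-500) := by
    rw [covI, map_mul, specializeCoeffs_C, ← transvectant_specializeCoeffs, hf,
      transvectant_four_exampleQuintic_self, C_mul_binaryQuadratic]
    norm_num
  rw [← eval_specializeCoeffs, invA, map_mul, ← transvectant_specializeCoeffs, hi,
    transvectant_two_binaryQuadratic_self]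
  norm_num
end

section
/- The Brioschi quintic x⁵ − 10c x³ + 45c² x − c², viewed as a polynomial over ℚ(c), has absolute invariants δ = 25Δ/A² = 1/5 and q = A³/(8M) = (25/8192)·(1728c − 1)/(1764c − 1). -/
/- Cayley Ω-process, transvectants, and the invariants of the binary quintic,
over a field K. Variables in `Fin 10`: 0..5 are the coefficients a₀,…,a₅;
6 = x (and x₁), 7 = y (and y₁); 8 = x₂; 9 = y₂. -/

open MvPolynomial

variable {K : Type*} [Field K]

/-!
Substituting the coefficients of a particular quintic commutes with Cayley's Ω-process, since Ω
only differentiates in x, y, x₂, y₂. For binary forms f, g the two summands ∂x₁∂y₂ and ∂x₂∂y₁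
of Ω act on f(x₁, y₁) g(x₂, y₂) as commuting operators, so the binomial theorem turns the
Ω-process into the classical closed formula
(f, g)ᵐ = ∑ₖ (-1)ᵐ⁻ᵏ (m choose k) ∂xᵏ∂yᵐ⁻ᵏ f · ∂xᵐ⁻ᵏ∂yᵏ g.
With it the covariants i, j, τ of the Brioschi quintic, and then A, B = 0 and C, are finite
computations in ℚ(c)[x, y]. The results factor as A = 625c⁴(1728c - 1),
Δ = 3125c⁸(1728c - 1)² and M = 10¹⁰c¹²(1728c - 1)²(1764c - 1), from which δ and q are read off.
-/

namespace MvPolynomial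

variable {R σ τ : Type*} [CommSemiring R]

theorem pderiv_comm (i j : σ) (p : MvPolynomial σ R) :
    pderiv i (pderiv j p) = pderiv j (pderiv i p) := by
  classical
  induction p using MvPolynomial.induction_on with
  | C a => simp
  | add p q hp hq => simp [hp, hq]
  | mul_X p k hp =>
    simp only [Derivation.leibniz, map_add, pderiv_X, smul_eq_mul, Pi.single_apply]
    split_ifs <;> simp only [hp, map_zero, Derivation.map_one_eq_zero, mul_zero, zero_mul,
      add_zero, zero_add, mul_one, one_mul] <;> ring

theorem pderiv_rename_of_notMem_range {f : σ → τ} {i : τ} (hi : i ∉ Set.range f)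
    (p : MvPolynomial σ R) : pderiv i (rename f p) = 0 := by
  induction p using MvPolynomial.induction_on with
  | C a => simp
  | add p q hp hq => simp [hp, hq]
  | mul_X p k hp =>
    simp [Derivation.leibniz, hp, pderiv_X_of_ne (fun h : f k = i => hi ⟨k, h⟩)]

theorem pderiv_bind₁_of_pderiv_eq_zero {φ : σ → MvPolynomial σ R} {j : σ} (hj : φ j = X j)
    (hφ : ∀ i ≠ j, pderiv j (φ i) = 0) (p : MvPolynomial σ R) :
    pderiv j (bind₁ φ p) = bind₁ φ (pderiv j p) := by
  classical
  induction p using MvPolynomial.induction_on with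
  | C a => simp
  | add p q hp hq => simp [hp, hq]
  | mul_X p i hp =>
    by_cases hij : i = j
    · subst hij
      simp [Derivation.leibniz, hp, hj]
    · simp [Derivation.leibniz, hp, hφ i hij, pderiv_X_of_ne hij]

theorem C_inv_mul_C_mul {a : K} (ha : a ≠ 0) (p : MvPolynomial σ K) : C a⁻¹ * (C a * p) = p := by
  rw [← mul_assoc, ← C_mul, inv_mul_cancel₀ ha, C_1, one_mul]

end MvPolynomial

theorem RatFunc.natCast_mul_X_sub_one_ne_zero (n : ℕ) : (n : RatFunc K) * RatFunc.X - 1 ≠ 0 := by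
  have h : algebraMap (Polynomial K) (RatFunc K) ((n : Polynomial K) * Polynomial.X - 1) =
      (n : RatFunc K) * RatFunc.X - 1 := by
    simp
  rw [← h, map_ne_zero_iff _ (RatFunc.algebraMap_injective K)]
  intro h0
  simpa using congrArg (Polynomial.eval 0) h0

def xyVar : Fin 2 → Fin 10 := ![6, 7]

def xyVar₂ : Fin 2 → Fin 10 := ![8, 9]

theorem xyVar_injective : Function.Injective xyVar := by decide

theorem xyVar₂_injective : Function.Injective xyVar₂ := by decide

noncomputable def binTransvectant (m : ℕ) (p q : MvPolynomial (Fin 2) K) :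
    MvPolynomial (Fin 2) K :=
  ∑ k ∈ Finset.range (m + 1), ((m.choose k : MvPolynomial (Fin 2) K) * (-1) ^ (m - k) *
    ((pderiv 0)^[k] ((pderiv 1)^[m - k] p) * (pderiv 1)^[k] ((pderiv 0)^[m - k] q)))

theorem toSecond_rename_xyVar (p : MvPolynomial (Fin 2) K) :
    toSecond (rename xyVar p) = rename xyVar₂ p := by
  rw [toSecond, bind₁_rename]
  refine DFunLike.congr_fun (algHom_ext fun i => ?_) p
  fin_cases i <;> simp [xyVar, xyVar₂]

theorem collapse_rename_xyVar (p : MvPolynomial (Fin 2) K) :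
    collapse (rename xyVar p) = rename xyVar p := by
  rw [collapse, bind₁_rename]
  refine DFunLike.congr_fun (algHom_ext fun i => ?_) p
  fin_cases i <;> simp [xyVar]

theorem collapse_rename_xyVar₂ (p : MvPolynomial (Fin 2) K) :
    collapse (rename xyVar₂ p) = rename xyVar p := by
  rw [collapse, bind₁_rename]
  refine DFunLike.congr_fun (algHom_ext fun i => ?_) p
  fin_cases i <;> simp [xyVar, xyVar₂]

theorem pderiv_xyVar₂_rename_xyVar (i : Fin 2) (p : MvPolynomial (Fin 2) K) :
    pderiv (xyVar₂ i) (rename xyVar p) = 0 :=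
  pderiv_rename_of_notMem_range (by fin_cases i <;> simp [xyVar, xyVar₂]) p

theorem pderiv_xyVar_rename_xyVar₂ (i : Fin 2) (p : MvPolynomial (Fin 2) K) :
    pderiv (xyVar i) (rename xyVar₂ p) = 0 :=
  pderiv_rename_of_notMem_range (by fin_cases i <;> simp [xyVar, xyVar₂]) p

noncomputable def mixedPDeriv (a b : Fin 2) : Module.End K (MvPolynomial (Fin 10) K) :=
  (pderiv (R := K) (xyVar a)).toLinearMap * (pderiv (xyVar₂ b)).toLinearMap

theorem commute_mixedPDeriv (a b c d : Fin 2) :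
    Commute (mixedPDeriv (K := K) a b) (mixedPDeriv c d) := by
  have h : ∀ i j : Fin 10, Commute (pderiv (R := K) i).toLinearMap (pderiv j).toLinearMap :=
    fun i j => LinearMap.ext fun p => pderiv_comm i j p
  exact ((h _ _).mul_left (h _ _)).mul_right ((h _ _).mul_left (h _ _))

theorem Omega_eq_mixedPDeriv (w : MvPolynomial (Fin 10) K) :
    Omega w = (mixedPDeriv 0 1 - mixedPDeriv 1 0 : Module.End K _) w := by
  simp only [Omega, mixedPDeriv, LinearMap.sub_apply, Module.End.mul_apply, Derivation.coeFn_coe]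
  rw [pderiv_comm 8 7]
  rfl

theorem mixedPDeriv_pow_rename_mul (a b : Fin 2) (n : ℕ) (p q : MvPolynomial (Fin 2) K) :
    (mixedPDeriv a b ^ n) (rename xyVar p * rename xyVar₂ q) =
      rename xyVar ((pderiv a)^[n] p) * rename xyVar₂ ((pderiv b)^[n] q) := by
  induction n with
  | zero => simp
  | succ n ih =>
    rw [pow_succ', Module.End.mul_apply, ih, Function.iterate_succ_apply',
      Function.iterate_succ_apply']
    simp [mixedPDeriv, Derivation.leibniz, pderiv_rename xyVar_injective,
      pderiv_rename xyVar₂_injective, pderiv_xyVar₂_rename_xyVar, pderiv_xyVar_rename_xyVar₂,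
      mul_comm]

theorem iterate_Omega_rename_mul (m : ℕ) (p q : MvPolynomial (Fin 2) K) :
    Omega^[m] (rename xyVar p * rename xyVar₂ q) =
      ∑ k ∈ Finset.range (m + 1), (m.choose k : MvPolynomial (Fin 10) K) * (-1) ^ (m - k) *
        (rename xyVar ((pderiv 0)^[k] ((pderiv 1)^[m - k] p)) *
          rename xyVar₂ ((pderiv 1)^[k] ((pderiv 0)^[m - k] q))) := by
  have hΩ : Omega^[m] = ⇑((mixedPDeriv (K := K) 0 1 - mixedPDeriv 1 0 : Module.End K _) ^ m) := by
    rw [Module.End.coe_pow]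
    exact congrArg (·^[m]) (funext Omega_eq_mixedPDeriv)
  rw [hΩ, sub_eq_add_neg, ← neg_one_smul K (mixedPDeriv 1 0),
    ((commute_mixedPDeriv (K := K) 0 1 1 0).smul_right (-1)).add_pow, LinearMap.sum_apply]
  refine Finset.sum_congr rfl fun k _ => ?_
  simp only [smul_pow, Module.End.mul_apply, LinearMap.smul_apply, Module.End.natCast_apply,
    map_nsmul, map_smul, mixedPDeriv_pow_rename_mul]
  simp only [nsmul_eq_mul, smul_eq_C_mul, C_pow, C_neg, C_1]
  ring

theorem transvectant_rename_xyVar (m : ℕ) (p q : MvPolynomial (Fin 2) K) :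
    transvectant m (rename xyVar p) (rename xyVar q) = rename xyVar (binTransvectant m p q) := by
  have h₁ := collapse_rename_xyVar (K := K)
  have h₂ := collapse_rename_xyVar₂ (K := K)
  simp only [collapse] at h₁ h₂
  rw [transvectant, toSecond_rename_xyVar, iterate_Omega_rename_mul, binTransvectant, collapse]
  simp only [map_sum, map_mul, map_pow, map_neg, map_one, map_natCast, h₁, h₂]

noncomputable def coeffSubst (v : Fin 10 → K) (i : Fin 10) : MvPolynomial (Fin 10) K :=
  if (i : ℕ) < 6 then C (v i) else X i

theorem eval_bind₁_coeffSubst (v : Fin 10 → K) (p : MvPolynomial (Fin 10) K) :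
    eval v (bind₁ (coeffSubst v) p) = eval v p := by
  change eval₂Hom (RingHom.id K) v _ = eval₂Hom (RingHom.id K) v p
  rw [eval₂Hom_bind₁]
  congr 2
  funext i
  by_cases hi : (i : ℕ) < 6 <;> simp [coeffSubst, hi]

theorem pderiv_bind₁_coeffSubst (v : Fin 10 → K) {j : Fin 10} (hj : 6 ≤ (j : ℕ))
    (p : MvPolynomial (Fin 10) K) :
    pderiv j (bind₁ (coeffSubst v) p) = bind₁ (coeffSubst v) (pderiv j p) := by
  refine pderiv_bind₁_of_pderiv_eq_zero (by simp [coeffSubst, hj]) (fun i hij => ?_) p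
  by_cases hi : (i : ℕ) < 6 <;> simp [coeffSubst, hi, pderiv_X_of_ne hij]

theorem bind₁_coeffSubst_Omega (v : Fin 10 → K) (w : MvPolynomial (Fin 10) K) :
    bind₁ (coeffSubst v) (Omega w) = Omega (bind₁ (coeffSubst v) w) := by
  simp only [Omega, map_sub, pderiv_bind₁_coeffSubst v (by decide : 6 ≤ ((6 : Fin 10) : ℕ)),
    pderiv_bind₁_coeffSubst v (by decide : 6 ≤ ((7 : Fin 10) : ℕ)),
    pderiv_bind₁_coeffSubst v (by decide : 6 ≤ ((8 : Fin 10) : ℕ)),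
    pderiv_bind₁_coeffSubst v (by decide : 6 ≤ ((9 : Fin 10) : ℕ))]

theorem bind₁_coeffSubst_toSecond (v : Fin 10 → K) (g : MvPolynomial (Fin 10) K) :
    bind₁ (coeffSubst v) (toSecond g) = toSecond (bind₁ (coeffSubst v) g) := by
  simp only [toSecond, bind₁_bind₁]
  congr 2
  funext i
  fin_cases i <;> simp [coeffSubst]

theorem bind₁_coeffSubst_collapse (v : Fin 10 → K) (w : MvPolynomial (Fin 10) K) :
    bind₁ (coeffSubst v) (collapse w) = collapse (bind₁ (coeffSubst v) w) := by
  simp only [collapse, bind₁_bind₁]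
  congr 2
  funext i
  fin_cases i <;> simp [coeffSubst]

theorem bind₁_coeffSubst_transvectant (v : Fin 10 → K) (m : ℕ) (f g : MvPolynomial (Fin 10) K) :
    bind₁ (coeffSubst v) (transvectant m f g) =
      transvectant m (bind₁ (coeffSubst v) f) (bind₁ (coeffSubst v) g) := by
  rw [transvectant, transvectant, bind₁_coeffSubst_collapse,
    Function.Semiconj.iterate_right (bind₁_coeffSubst_Omega v) m, map_mul, bind₁_coeffSubst_toSecond]

theorem bind₁_coeffSubst_genQuintic (v : Fin 10 → K) :
    bind₁ (coeffSubst v) genQuintic = rename xyVar (C (v 0) * X 0 ^ 5 + C (v 1) * X 0 ^ 4 * X 1 +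
      C (v 2) * X 0 ^ 3 * X 1 ^ 2 + C (v 3) * X 0 ^ 2 * X 1 ^ 3 + C (v 4) * X 0 * X 1 ^ 4 +
      C (v 5) * X 1 ^ 5) := by
  simp [genQuintic, coeffSubst, xyVar]

noncomputable def binMonomial (a : K) (m n : ℕ) : MvPolynomial (Fin 2) K :=
  C a * X 0 ^ m * X 1 ^ n

theorem pderiv_zero_binMonomial (a : K) (m n : ℕ) :
    pderiv 0 (binMonomial a m n) = binMonomial (m * a) (m - 1) n := by
  simp only [binMonomial, Derivation.leibniz, Derivation.leibniz_pow, pderiv_X_self,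
    pderiv_X_of_ne one_ne_zero, pderiv_C, smul_eq_mul, nsmul_eq_mul, C_mul, map_natCast]
  ring

theorem pderiv_one_binMonomial (a : K) (m n : ℕ) :
    pderiv 1 (binMonomial a m n) = binMonomial (n * a) m (n - 1) := by
  simp only [binMonomial, Derivation.leibniz, Derivation.leibniz_pow, pderiv_X_self,
    pderiv_X_of_ne zero_ne_one, pderiv_C, smul_eq_mul, nsmul_eq_mul, C_mul, map_natCast]
  ring

noncomputable def brioschiForm : MvPolynomial (Fin 2) (RatFunc ℚ) :=
  binMonomial 1 5 0 + binMonomial (-10 * RatFunc.X) 3 2 + binMonomial (45 * RatFunc.X ^ 2) 1 4 +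
    binMonomial (-RatFunc.X ^ 2) 0 5

noncomputable def brioschiI : MvPolynomial (Fin 2) (RatFunc ℚ) :=
  binMonomial (1200 * RatFunc.X ^ 2) 2 0 + binMonomial (-100 * RatFunc.X ^ 2) 1 1 +
    binMonomial (3600 * RatFunc.X ^ 3) 0 2

noncomputable def brioschiJ : MvPolynomial (Fin 2) (RatFunc ℚ) :=
  binMonomial (-8000 * RatFunc.X ^ 3) 3 0 + binMonomial (1000 * RatFunc.X ^ 3) 2 1 +
    binMonomial (-72000 * RatFunc.X ^ 4) 1 2 + binMonomial (1000 * RatFunc.X ^ 4) 0 3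

noncomputable def brioschiTau : MvPolynomial (Fin 2) (RatFunc ℚ) :=
  binMonomial (500000 * RatFunc.X ^ 6 * (1728 * RatFunc.X - 1)) 2 0 +
    binMonomial (-1500000 * RatFunc.X ^ 7 * (1728 * RatFunc.X - 1)) 0 2

theorem binTransvectant_brioschiForm_brioschiForm :
    binTransvectant 4 brioschiForm brioschiForm = C 288 * brioschiI := by
  simp only [binTransvectant, Finset.sum_range_succ, Finset.sum_range_zero, brioschiForm,
    Function.iterate_succ_apply', Function.iterate_zero_apply, map_add, pderiv_zero_binMonomial,
    pderiv_one_binMonomial, Nat.reduceSub, Nat.cast_ofNat, Nat.cast_zero, Nat.cast_one]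
  simp only [brioschiI, binMonomial, map_mul, map_neg, map_pow, map_one, map_ofNat,
    map_zero, Nat.choose]
  ring

theorem binTransvectant_brioschiForm_brioschiI :
    binTransvectant 2 brioschiForm brioschiI = -(C 12 * brioschiJ) := by
  simp only [binTransvectant, Finset.sum_range_succ, Finset.sum_range_zero, brioschiForm, brioschiI,
    Function.iterate_succ_apply', Function.iterate_zero_apply, map_add, pderiv_zero_binMonomial,
    pderiv_one_binMonomial, Nat.reduceSub, Nat.cast_ofNat, Nat.cast_zero, Nat.cast_one]
  simp only [brioschiJ, binMonomial, map_mul, map_neg, map_pow, map_one, map_ofNat,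
    map_zero, Nat.choose]
  ring

theorem binTransvectant_brioschiI_brioschiI :
    binTransvectant 2 brioschiI brioschiI = C (20000 * RatFunc.X ^ 4 * (1728 * RatFunc.X - 1)) := by
  simp only [binTransvectant, Finset.sum_range_succ, Finset.sum_range_zero, brioschiI,
    Function.iterate_succ_apply', Function.iterate_zero_apply, map_add, pderiv_zero_binMonomial,
    pderiv_one_binMonomial, Nat.reduceSub, Nat.cast_ofNat, Nat.cast_zero, Nat.cast_one]
  simp only [binMonomial, map_mul, map_sub, map_neg, map_pow, map_one, map_ofNat,
    map_zero, Nat.choose]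
  ring

theorem binTransvectant_brioschiJ_brioschiJ :
    binTransvectant 2 brioschiJ brioschiJ = C 16 * brioschiTau := by
  simp only [binTransvectant, Finset.sum_range_succ, Finset.sum_range_zero, brioschiJ,
    Function.iterate_succ_apply', Function.iterate_zero_apply, map_add, pderiv_zero_binMonomial,
    pderiv_one_binMonomial, Nat.reduceSub, Nat.cast_ofNat, Nat.cast_zero, Nat.cast_one]
  simp only [brioschiTau, binMonomial, map_mul, map_sub, map_neg, map_pow, map_one, map_ofNat,
    map_zero, Nat.choose]
  ring

theorem binTransvectant_brioschiTau_brioschiI :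
    binTransvectant 2 brioschiTau brioschiI = 0 := by
  simp only [binTransvectant, Finset.sum_range_succ, Finset.sum_range_zero, brioschiTau, brioschiI,
    Function.iterate_succ_apply', Function.iterate_zero_apply, map_add, pderiv_zero_binMonomial,
    pderiv_one_binMonomial, Nat.reduceSub, Nat.cast_ofNat, Nat.cast_zero, Nat.cast_one]
  simp only [binMonomial, map_mul, map_sub, map_neg, map_pow, map_one, map_ofNat,
    map_zero, Nat.choose]
  ring

theorem binTransvectant_brioschiTau_brioschiTau :
    binTransvectant 2 brioschiTau brioschiTau =
      C (-6000000000000 * RatFunc.X ^ 13 * (1728 * RatFunc.X - 1) ^ 2) := by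
  simp only [binTransvectant, Finset.sum_range_succ, Finset.sum_range_zero, brioschiTau,
    Function.iterate_succ_apply', Function.iterate_zero_apply, map_add, pderiv_zero_binMonomial,
    pderiv_one_binMonomial, Nat.reduceSub, Nat.cast_ofNat, Nat.cast_zero, Nat.cast_one]
  simp only [binMonomial, map_mul, map_sub, map_neg, map_pow, map_one, map_ofNat,
    map_zero, Nat.choose]
  ring

section Brioschi

variable {v : Fin 10 → RatFunc ℚ}

theorem bind₁_coeffSubst_covI_of_brioschi
    (hv : bind₁ (coeffSubst v) genQuintic = rename xyVar brioschiForm) :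
    bind₁ (coeffSubst v) covI = rename xyVar brioschiI := by
  rw [covI, map_mul, bind₁_C_right, bind₁_coeffSubst_transvectant, hv, transvectant_rename_xyVar,
    binTransvectant_brioschiForm_brioschiForm, map_mul, rename_C, C_inv_mul_C_mul (by norm_num)]

theorem bind₁_coeffSubst_covJ_of_brioschi
    (hv : bind₁ (coeffSubst v) genQuintic = rename xyVar brioschiForm) :
    bind₁ (coeffSubst v) covJ = rename xyVar brioschiJ := by
  rw [covJ, map_neg, map_mul, bind₁_C_right, bind₁_coeffSubst_transvectant, hv,
    bind₁_coeffSubst_covI_of_brioschi hv, transvectant_rename_xyVar,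
    binTransvectant_brioschiForm_brioschiI, map_neg, mul_neg, neg_neg, map_mul, rename_C,
    C_inv_mul_C_mul (by norm_num)]

theorem bind₁_coeffSubst_covTau_of_brioschi
    (hv : bind₁ (coeffSubst v) genQuintic = rename xyVar brioschiForm) :
    bind₁ (coeffSubst v) covTau = rename xyVar brioschiTau := by
  rw [covTau, map_mul, bind₁_C_right, bind₁_coeffSubst_transvectant,
    bind₁_coeffSubst_covJ_of_brioschi hv, transvectant_rename_xyVar,
    binTransvectant_brioschiJ_brioschiJ, map_mul, rename_C, C_inv_mul_C_mul (by norm_num)]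

theorem eval_invA_of_brioschi
    (hv : bind₁ (coeffSubst v) genQuintic = rename xyVar brioschiForm) :
    eval v invA = 625 * RatFunc.X ^ 4 * (1728 * RatFunc.X - 1) := by
  rw [← eval_bind₁_coeffSubst, invA, map_mul, bind₁_C_right, bind₁_coeffSubst_transvectant,
    bind₁_coeffSubst_covI_of_brioschi hv, transvectant_rename_xyVar,
    binTransvectant_brioschiI_brioschiI, rename_C, ← C_mul, eval_C]
  ring

theorem eval_invB_of_brioschi
    (hv : bind₁ (coeffSubst v) genQuintic = rename xyVar brioschiForm) :
    eval v invB = 0 := by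
  rw [← eval_bind₁_coeffSubst, invB, map_mul, bind₁_C_right, bind₁_coeffSubst_transvectant,
    bind₁_coeffSubst_covTau_of_brioschi hv, bind₁_coeffSubst_covI_of_brioschi hv,
    transvectant_rename_xyVar, binTransvectant_brioschiTau_brioschiI, map_zero, mul_zero,
    map_zero]

theorem eval_invC_of_brioschi
    (hv : bind₁ (coeffSubst v) genQuintic = rename xyVar brioschiForm) :
    eval v invC = -1000000000000 * RatFunc.X ^ 13 * (1728 * RatFunc.X - 1) ^ 2 := by
  rw [← eval_bind₁_coeffSubst, invC, map_mul, bind₁_C_right, bind₁_coeffSubst_transvectant,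
    bind₁_coeffSubst_covTau_of_brioschi hv, transvectant_rename_xyVar,
    binTransvectant_brioschiTau_brioschiTau, rename_C, ← C_mul, eval_C]
  ring

theorem eval_invDelta_of_brioschi
    (hv : bind₁ (coeffSubst v) genQuintic = rename xyVar brioschiForm) :
    eval v invDelta = 3125 * RatFunc.X ^ 8 * (1728 * RatFunc.X - 1) ^ 2 := by
  simp only [invDelta, map_mul, map_sub, map_pow, map_ofNat, eval_C, eval_invA_of_brioschi hv,
    eval_invB_of_brioschi hv]
  ring

theorem eval_invM_of_brioschi
    (hv : bind₁ (coeffSubst v) genQuintic = rename xyVar brioschiForm) :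
    eval v invM =
      10000000000 * RatFunc.X ^ 12 * (1728 * RatFunc.X - 1) ^ 2 * (1764 * RatFunc.X - 1) := by
  simp only [invM, map_mul, map_add, map_neg, map_pow, map_ofNat, eval_C, eval_invA_of_brioschi hv,
    eval_invC_of_brioschi hv, eval_invDelta_of_brioschi hv]
  ring

end Brioschi

/-- the Brioschi quintic x⁵ − 10c x³ + 45c² x − c² over ℚ(c) has
absolute invariants δ = 25Δ/A² = 1/5 and q = A³/(8M) = (25/8192)(1728c−1)/(1764c−1). -/
theorem brioschi_absolute_invariants :
    ∀ v : Fin 10 → RatFunc ℚ,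
      v 0 = 1 → v 1 = 0 → v 2 = -10 * RatFunc.X → v 3 = 0 →
      v 4 = 45 * RatFunc.X ^ 2 → v 5 = -RatFunc.X ^ 2 →
      eval v (invA (K := RatFunc ℚ)) ≠ 0 ∧
      eval v (invM (K := RatFunc ℚ)) ≠ 0 ∧
      25 * eval v (invDelta (K := RatFunc ℚ)) / (eval v (invA (K := RatFunc ℚ))) ^ 2
        = 1 / 5 ∧
      (eval v (invA (K := RatFunc ℚ))) ^ 3 / (8 * eval v (invM (K := RatFunc ℚ)))
        = 25 / 8192 * (1728 * RatFunc.X - 1) / (1764 * RatFunc.X - 1) := by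
  intro v h0 h1 h2 h3 h4 h5
  have hv : bind₁ (coeffSubst v) genQuintic = rename xyVar brioschiForm := by
    rw [bind₁_coeffSubst_genQuintic, h0, h1, h2, h3, h4, h5, brioschiForm]
    congr 1
    simp only [binMonomial, map_zero, map_one, map_neg, map_mul, map_pow, map_ofNat]
    ring
  have hX : (RatFunc.X : RatFunc ℚ) ≠ 0 := RatFunc.X_ne_zero
  have h1728 : (1728 : RatFunc ℚ) * RatFunc.X - 1 ≠ 0 := by
    exact_mod_cast RatFunc.natCast_mul_X_sub_one_ne_zero 1728
  have h1764 : (1764 : RatFunc ℚ) * RatFunc.X - 1 ≠ 0 := by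
    exact_mod_cast RatFunc.natCast_mul_X_sub_one_ne_zero 1764
  have hA : (625 : RatFunc ℚ) * RatFunc.X ^ 4 * (1728 * RatFunc.X - 1) ≠ 0 := by simp [hX, h1728]
  have hM : (10000000000 : RatFunc ℚ) * RatFunc.X ^ 12 * (1728 * RatFunc.X - 1) ^ 2 *
      (1764 * RatFunc.X - 1) ≠ 0 := by
    simp [hX, h1728, h1764]
  rw [eval_invA_of_brioschi hv, eval_invDelta_of_brioschi hv, eval_invM_of_brioschi hv]
  refine ⟨hA, hM, ?_, ?_⟩
  · rw [div_eq_div_iff (pow_ne_zero 2 hA) (by norm_num)]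
    ring
  · rw [div_eq_div_iff (mul_ne_zero (by norm_num) hM) h1764]
    ring
end
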